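/- Let ζ_0, ζ_1, ζ_0', ζ_1' ∈ C with ζ_0'+ζ_1' = c(ζ_0+ζ_1), c > 0, and let ξ_0 = -(c+1)(ζ_0+ζ_1), ξ_2 = -((e/2+k)ζ_0 + (e/2+k-1)ζ_1) + (e/2-k')ζ_0' + (e/2-k'+1)ζ_1' for real parameters e, k, k'. Then det[[Re ξ_0, Re ξ_2],[Im ξ_0, Im ξ_2]] = -(c+1)·(det[[Re ζ_0, Re ζ_1],[Im ζ_0, Im ζ_1]] - det[[Re(ζ_0+ζ_1), Re ζ_0'],[Im(ζ_0+ζ_1), Im ζ_0']]). In particular this determinant vanishes if and only if det(ζ_0, ζ_1) = det(ζ_0+ζ_1, ζ_0'), since c+1 ≠ 0. -/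
import Mathlib


/-- det[[Re z, Re w],[Im z, Im w]] for complex numbers z, w. -/
def det2 (z w : ℂ) : ℝ := z.re * w.im - z.im * w.re

/-- Vertex condition for the type-3 wall: with ζ₀'+ζ₁' = c(ζ₀+ζ₁), c > 0, and
ξ₀ = -(c+1)(ζ₀+ζ₁),
ξ₂ = -((e/2+k)ζ₀ + (e/2+k-1)ζ₁) + (e/2-k')ζ₀' + (e/2-k'+1)ζ₁',
one has det(ξ₀,ξ₂) = -(c+1)·(det(ζ₀,ζ₁) − det(ζ₀+ζ₁, ζ₀')); in particular
det(ξ₀,ξ₂) = 0 iff det(ζ₀,ζ₁) = det(ζ₀+ζ₁, ζ₀'). -/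
theorem wall_type3_vertex (ζ0 ζ1 ζ0' ζ1' : ℂ) (c e k k' : ℝ) (hc : 0 < c)
    (h : ζ0' + ζ1' = (c : ℂ) * (ζ0 + ζ1)) :
    det2 (-((c : ℂ) + 1) * (ζ0 + ζ1))
        (-(((e/2 + k : ℝ) : ℂ) * ζ0 + ((e/2 + k - 1 : ℝ) : ℂ) * ζ1)
          + ((e/2 - k' : ℝ) : ℂ) * ζ0' + ((e/2 - k' + 1 : ℝ) : ℂ) * ζ1')
      = -(c + 1) * (det2 ζ0 ζ1 - det2 (ζ0 + ζ1) ζ0') ∧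
    (det2 (-((c : ℂ) + 1) * (ζ0 + ζ1))
        (-(((e/2 + k : ℝ) : ℂ) * ζ0 + ((e/2 + k - 1 : ℝ) : ℂ) * ζ1)
          + ((e/2 - k' : ℝ) : ℂ) * ζ0' + ((e/2 - k' + 1 : ℝ) : ℂ) * ζ1') = 0
      ↔ det2 ζ0 ζ1 = det2 (ζ0 + ζ1) ζ0') := by
  have h1 : ζ1' = (c : ℂ) * (ζ0 + ζ1) - ζ0' := by linear_combination h
  subst h1
  have key : det2 (-((c : ℂ) + 1) * (ζ0 + ζ1))
        (-(((e/2 + k : ℝ) : ℂ) * ζ0 + ((e/2 + k - 1 : ℝ) : ℂ) * ζ1)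
          + ((e/2 - k' : ℝ) : ℂ) * ζ0' + ((e/2 - k' + 1 : ℝ) : ℂ) * ((c : ℂ) * (ζ0 + ζ1) - ζ0'))
      = -(c + 1) * (det2 ζ0 ζ1 - det2 (ζ0 + ζ1) ζ0') := by
    simp only [det2, Complex.add_re, Complex.add_im, Complex.sub_re, Complex.sub_im,
      Complex.mul_re, Complex.mul_im, Complex.neg_re, Complex.neg_im, Complex.ofReal_re,
      Complex.ofReal_im, Complex.one_re, Complex.one_im]
    ring
  refine ⟨key, ?_⟩
  rw [key]
  constructor
  · intro h0
    have hne : -(c+1) ≠ 0 := by nlinarith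
    have := mul_eq_zero.mp h0
    rcases this with h' | h'
    · exact absurd h' hne
    · linarith [sub_eq_zero.mp h']
  · intro h0
    rw [h0]
    ring
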